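/- Every extended 1-perfect trade (T_0, T_1) of length 6 has volume 4 and satisfies T_1 = T_0 + 1^6 (where 1^6 is the all-one word of length 6); moreover, every such trade is equivalent to the trade with T_0 = {000000, 111100, 110011, 001111} and T_1 = {111111, 000011, 001100, 110000}. -/

import Mathlib

/-!
Translate so that `0 ∈ T₀`. Two words on the same side of a trade cannot be at distance 2, since
their midpoints would have two neighbours on that side. Hence the neighbours in `T₁` of the six
unit vectors are weight-2 words with pairwise disjoint supports, i.e. a perfect matching of the
coordinates, which a permutation turns into `110000, 001100, 000011`. Once these lie in `T₁`,
the distance-2 and neighbour-counting constraints leave only the standard trade.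
-/

/-- An extended 1-perfect trade of length `n`. -/
def IsExtTrade {n : ℕ} (T₀ T₁ : Finset (Fin n → ZMod 2)) : Prop :=
  T₀.Nonempty ∧ T₁.Nonempty ∧ Disjoint T₀ T₁ ∧
  (∀ x ∈ T₀ ∪ T₁, Even (hammingNorm x)) ∧
  ∀ x : Fin n → ZMod 2, Odd (hammingNorm x) →
    (T₀.filter fun y => hammingDist x y = 1).card =
      (T₁.filter fun y => hammingDist x y = 1).card ∧
    (T₀.filter fun y => hammingDist x y = 1).card ≤ 1

/-- Two pairs of sets of even-weight words are equivalent if a coordinate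
permutation followed by translation by an even-weight word sends one pair to the
other (in either order). -/
def TradeEquiv {n : ℕ} (C₀ C₁ S₀ S₁ : Finset (Fin n → ZMod 2)) : Prop :=
  ∃ (σ : Equiv.Perm (Fin n)) (v : Fin n → ZMod 2), Even (hammingNorm v) ∧
    ((S₀.image fun x => (x ∘ σ) + v) = C₀ ∧ (S₁.image fun x => (x ∘ σ) + v) = C₁ ∨
     (S₀.image fun x => (x ∘ σ) + v) = C₁ ∧ (S₁.image fun x => (x ∘ σ) + v) = C₀)

section Parity

variable {ι : Type*} [Fintype ι]

theorem natCast_hammingNorm_eq_sum (x : ι → ZMod 2) : (hammingNorm x : ZMod 2) = ∑ i, x i := by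
  rw [hammingNorm, Finset.natCast_card_filter]
  exact Finset.sum_congr rfl fun i _ => by generalize x i = a; revert a; decide

theorem natCast_hammingNorm_add (x y : ι → ZMod 2) :
    (hammingNorm (x + y) : ZMod 2) = hammingNorm x + hammingNorm y := by
  simp only [natCast_hammingNorm_eq_sum, Pi.add_apply, Finset.sum_add_distrib]

theorem even_hammingNorm_add_iff {x v : ι → ZMod 2} (hv : Even (hammingNorm v)) :
    Even (hammingNorm (x + v)) ↔ Even (hammingNorm x) := by
  rw [← ZMod.natCast_eq_zero_iff_even, ← ZMod.natCast_eq_zero_iff_even, natCast_hammingNorm_add,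
    hv.natCast_zmod_two, add_zero]

theorem odd_hammingNorm_of_hammingDist_eq_one {x y : ι → ZMod 2} (h : hammingDist x y = 1)
    (hy : Even (hammingNorm y)) : Odd (hammingNorm x) := by
  have hxy := congrArg (fun k : ℕ => (k : ZMod 2)) (hammingDist_eq_hammingNorm x y)
  rw [h, ZModModule.neg_eq_self, natCast_hammingNorm_add, hy.natCast_zmod_two, add_zero] at hxy
  exact ZMod.natCast_eq_one_iff_odd.mp (by exact_mod_cast hxy.symm)

end Parity

theorem exists_midpoint_of_hammingDist_eq_two {ι : Type*} {β : ι → Type*} [Fintype ι]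
    [DecidableEq ι] [∀ i, DecidableEq (β i)] {a b : ∀ i, β i} (h : hammingDist a b = 2) :
    ∃ x, hammingDist x a = 1 ∧ hammingDist x b = 1 := by
  obtain ⟨i, hi⟩ : ∃ i, a i ≠ b i := by
    by_contra! hab
    simp [funext hab] at h
  refine ⟨Function.update a i (b i), ?_, ?_⟩
  · rw [hammingDist, Finset.card_eq_one]
    refine ⟨i, Finset.ext fun j => ?_⟩
    by_cases hj : j = i
    · subst hj; simpa using hi.symm
    · simp [hj]
  · have hfilter : ({j | Function.update a i (b i) j ≠ b j} : Finset ι) =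
        ({j | a j ≠ b j} : Finset ι).erase i := by
      ext j
      by_cases hj : j = i <;> simp [hj]
    rw [hammingDist, hfilter, Finset.card_erase_of_mem (by simpa using hi)]
    rw [hammingDist] at h
    omega

theorem hammingDist_comp_perm {ι β : Type*} [Fintype ι] [DecidableEq β] (x y : ι → β)
    (σ : Equiv.Perm ι) : hammingDist (x ∘ σ) (y ∘ σ) = hammingDist x y := by
  simp only [hammingDist, Finset.card_filter]
  exact Equiv.sum_comp σ (fun i => if x i ≠ y i then 1 else 0)

namespace IsExtTrade

variable {n : ℕ} {A B : Finset (Fin n → ZMod 2)}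

theorem symm (hT : IsExtTrade A B) : IsExtTrade B A := by
  obtain ⟨hA, hB, hAB, hev, hcount⟩ := hT
  refine ⟨hB, hA, hAB.symm, fun x hx => hev x (Finset.union_comm A B ▸ hx), fun x hx => ?_⟩
  obtain ⟨heq, hle⟩ := hcount x hx
  exact ⟨heq.symm, heq ▸ hle⟩

theorem even_of_mem_left (hT : IsExtTrade A B) {a : Fin n → ZMod 2} (ha : a ∈ A) :
    Even (hammingNorm a) :=
  hT.2.2.2.1 a (Finset.mem_union_left B ha)

theorem ne_of_mem_left (hT : IsExtTrade A B) {a b : Fin n → ZMod 2} (ha : a ∈ A) (hb : b ∈ B) :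
    a ≠ b :=
  Finset.disjoint_iff_ne.mp hT.2.2.1 a ha b hb

theorem exists_mem_right_of_mem_left (hT : IsExtTrade A B) {x a : Fin n → ZMod 2}
    (hx : Odd (hammingNorm x)) (ha : a ∈ A) (hxa : hammingDist x a = 1) :
    ∃ b ∈ B, hammingDist x b = 1 := by
  have hpos : 0 < (A.filter fun y => hammingDist x y = 1).card :=
    Finset.card_pos.mpr ⟨a, Finset.mem_filter.mpr ⟨ha, hxa⟩⟩
  rw [(hT.2.2.2.2 x hx).1] at hpos
  obtain ⟨b, hb⟩ := Finset.card_pos.mp hpos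
  exact ⟨b, (Finset.mem_filter.mp hb).1, (Finset.mem_filter.mp hb).2⟩

theorem eq_of_mem_left (hT : IsExtTrade A B) {x a a' : Fin n → ZMod 2}
    (hx : Odd (hammingNorm x)) (ha : a ∈ A) (ha' : a' ∈ A) (hxa : hammingDist x a = 1)
    (hxa' : hammingDist x a' = 1) : a = a' :=
  Finset.card_le_one.mp (hT.2.2.2.2 x hx).2 a (Finset.mem_filter.mpr ⟨ha, hxa⟩) a'
    (Finset.mem_filter.mpr ⟨ha', hxa'⟩)

/-- The midpoint of two words of `A` at distance two would have two neighbours in `A`. -/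
theorem hammingDist_ne_two_of_mem_left (hT : IsExtTrade A B) {a a' : Fin n → ZMod 2}
    (ha : a ∈ A) (ha' : a' ∈ A) : hammingDist a a' ≠ 2 := by
  intro h
  obtain ⟨x, hxa, hxa'⟩ := exists_midpoint_of_hammingDist_eq_two h
  have hx := odd_hammingNorm_of_hammingDist_eq_one hxa (hT.even_of_mem_left ha)
  rw [hT.eq_of_mem_left hx ha ha' hxa hxa', hammingDist_self] at h
  exact absurd h (by decide)

theorem mem_left_of_unique_neighbor (hT : IsExtTrade A B) {S : Finset (Fin n → ZMod 2)}
    (hAS : A ⊆ S) {x b t : Fin n → ZMod 2} (hx : Odd (hammingNorm x)) (hb : b ∈ B)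
    (hxb : hammingDist x b = 1)
    (ht : ∀ a ∈ S, hammingDist x a = 1 → a = t) : t ∈ A := by
  obtain ⟨a, ha, hxa⟩ := hT.symm.exists_mem_right_of_mem_left hx hb hxb
  exact ht a (hAS ha) hxa ▸ ha

theorem image_equiv (hT : IsExtTrade A B) (f : (Fin n → ZMod 2) ≃ (Fin n → ZMod 2))
    (hdist : ∀ x y, hammingDist (f x) (f y) = hammingDist x y)
    (heven : ∀ x, Even (hammingNorm (f x)) ↔ Even (hammingNorm x)) :
    IsExtTrade (A.image f) (B.image f) := by
  obtain ⟨hA, hB, hAB, hev, hcount⟩ := hT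
  have hcard (S : Finset (Fin n → ZMod 2)) (x : Fin n → ZMod 2) :
      ((S.image f).filter fun y => hammingDist x y = 1).card =
        (S.filter fun y => hammingDist (f.symm x) y = 1).card := by
    rw [Finset.filter_image, Finset.card_image_of_injective _ f.injective]
    congr 1
    exact Finset.filter_congr fun y _ => by rw [← hdist (f.symm x) y, f.apply_symm_apply]
  refine ⟨hA.image f, hB.image f, (Finset.disjoint_image f.injective).mpr hAB, ?_, ?_⟩
  · intro x hx
    rw [← Finset.image_union] at hx
    obtain ⟨y, hy, rfl⟩ := Finset.mem_image.mp hx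
    exact (heven y).mpr (hev y hy)
  · intro x hx
    have hx' : Odd (hammingNorm (f.symm x)) := by
      rw [← Nat.not_even_iff_odd, ← heven, Equiv.apply_symm_apply, Nat.not_even_iff_odd]
      exact hx
    rw [hcard, hcard]
    exact hcount _ hx'

theorem image_add_right (hT : IsExtTrade A B) {v : Fin n → ZMod 2} (hv : Even (hammingNorm v)) :
    IsExtTrade (A.image (· + v)) (B.image (· + v)) :=
  hT.image_equiv (Equiv.addRight v)
    (fun x y => by
      simp only [hammingDist_eq_hammingNorm, Equiv.coe_addRight, neg_add_rev]
      abel_nf)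
    (fun _ => even_hammingNorm_add_iff hv)

theorem image_comp_perm (hT : IsExtTrade A B) (σ : Equiv.Perm (Fin n)) :
    IsExtTrade (A.image (· ∘ σ)) (B.image (· ∘ σ)) :=
  hT.image_equiv ⟨(· ∘ σ), (· ∘ σ.symm), fun x => by ext; simp, fun x => by ext; simp⟩
    (fun x y => hammingDist_comp_perm x y σ)
    (fun x => by
      rw [← hammingDist_zero_right, ← hammingDist_zero_right, ← hammingDist_comp_perm x 0 σ]
      rfl)

end IsExtTrade

section PermImage

variable {ι α : Type*} [Fintype ι] [DecidableEq α]

theorem Finset.image_comp_perm_image_comp_perm (S : Finset (ι → α)) (σ τ : Equiv.Perm ι) :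
    (S.image (· ∘ σ)).image (· ∘ τ) = S.image (· ∘ ⇑(σ * τ)) := by
  rw [Finset.image_image]
  rfl

theorem Finset.image_comp_perm_image_comp_inv (S : Finset (ι → α)) (τ : Equiv.Perm ι) :
    (S.image (· ∘ τ)).image (· ∘ ⇑τ⁻¹) = S := by
  rw [Finset.image_comp_perm_image_comp_perm, mul_inv_cancel, Equiv.Perm.coe_one]
  exact Finset.image_id

end PermImage

theorem Finset.image_add_right_image_add_right {G : Type*} [AddCommGroup G] [Module (ZMod 2) G]
    [DecidableEq G] (S : Finset G) (v : G) : (S.image (· + v)).image (· + v) = S := by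
  have hinv : Function.Involutive (· + v) := fun x => by simp [add_assoc, ZModModule.add_self]
  rw [Finset.image_image, hinv.comp_self, Finset.image_id]

namespace ExtTradeSix

abbrev pair₁ : Fin 6 → ZMod 2 := ![1,1,0,0,0,0]
abbrev pair₂ : Fin 6 → ZMod 2 := ![0,0,1,1,0,0]
abbrev pair₃ : Fin 6 → ZMod 2 := ![0,0,0,0,1,1]

abbrev std₀ : Finset (Fin 6 → ZMod 2) :=
  {![0,0,0,0,0,0], ![1,1,1,1,0,0], ![1,1,0,0,1,1], ![0,0,1,1,1,1]}
abbrev std₁ : Finset (Fin 6 → ZMod 2) :=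
  {![1,1,1,1,1,1], ![0,0,0,0,1,1], ![0,0,1,1,0,0], ![1,1,0,0,0,0]}

def IsPermOfStd (A B : Finset (Fin 6 → ZMod 2)) : Prop :=
  ∃ σ : Equiv.Perm (Fin 6), A = std₀.image (· ∘ σ) ∧ B = std₁.image (· ∘ σ)

variable {A B : Finset (Fin 6 → ZMod 2)}

theorem subset_std₁ (hT : IsExtTrade A B) (h0 : 0 ∈ A) (h₁ : pair₁ ∈ B) (h₂ : pair₂ ∈ B)
    (h₃ : pair₃ ∈ B) : B ⊆ std₁ := by
  have key : ∀ b : Fin 6 → ZMod 2, Even (hammingNorm b) → b ≠ 0 → hammingDist b pair₁ ≠ 2 →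
      hammingDist b pair₂ ≠ 2 → hammingDist b pair₃ ≠ 2 → b ∈ std₁ := by
    decide
  intro b hb
  have hT' := hT.symm
  exact key b (hT'.even_of_mem_left hb) (hT.ne_of_mem_left h0 hb).symm
    (hT'.hammingDist_ne_two_of_mem_left hb h₁) (hT'.hammingDist_ne_two_of_mem_left hb h₂)
    (hT'.hammingDist_ne_two_of_mem_left hb h₃)

set_option maxRecDepth 10000 in
theorem subset_std₀ (hT : IsExtTrade A B) (h0 : 0 ∈ A) (hB : B ⊆ std₁) : A ⊆ std₀ := by
  -- `b ≠ a` excludes `a = 1⁶`: the only neighbour of `111110` in `std₁` is `1⁶` itself.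
  have key : ∀ a : Fin 6 → ZMod 2, Even (hammingNorm a) → hammingDist a 0 ≠ 2 →
      (∀ x, hammingDist x a = 1 → ∃ b ∈ std₁, b ≠ a ∧ hammingDist x b = 1) → a ∈ std₀ := by
    decide
  intro a ha
  have ha_even := hT.even_of_mem_left ha
  refine key a ha_even (hT.hammingDist_ne_two_of_mem_left ha h0) fun x hxa => ?_
  obtain ⟨b, hb, hxb⟩ := hT.exists_mem_right_of_mem_left
    (odd_hammingNorm_of_hammingDist_eq_one hxa ha_even) ha hxa
  exact ⟨b, hB hb, (hT.ne_of_mem_left ha hb).symm, hxb⟩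

theorem eq_std_of_pairs_mem (hT : IsExtTrade A B) (h0 : 0 ∈ A) (h₁ : pair₁ ∈ B)
    (h₂ : pair₂ ∈ B) (h₃ : pair₃ ∈ B) : A = std₀ ∧ B = std₁ := by
  have hB := subset_std₁ hT h0 h₁ h₂ h₃
  have hA := subset_std₀ hT h0 hB
  have h0' : ![0,0,0,0,0,0] ∈ A := by convert h0 using 1; decide
  have hu₁ : ![1,1,1,1,0,0] ∈ A :=
    hT.mem_left_of_unique_neighbor hA (x := ![1,1,1,0,0,0]) (by decide) h₁ (by decide)
      (by decide)
  have hu₂ : ![1,1,0,0,1,1] ∈ A :=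
    hT.mem_left_of_unique_neighbor hA (x := ![1,1,0,0,1,0]) (by decide) h₁ (by decide)
      (by decide)
  have hu₃ : ![0,0,1,1,1,1] ∈ A :=
    hT.mem_left_of_unique_neighbor hA (x := ![0,0,1,1,1,0]) (by decide) h₂ (by decide)
      (by decide)
  have hones : ![1,1,1,1,1,1] ∈ B :=
    hT.symm.mem_left_of_unique_neighbor hB (x := ![1,1,1,1,1,0]) (by decide) hu₁ (by decide)
      (by decide)
  refine ⟨hA.antisymm ?_, hB.antisymm ?_⟩ <;> simp [Finset.insert_subset_iff, *]

theorem exists_perm_pair₁_mem (hT : IsExtTrade A B) (h0 : 0 ∈ A) :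
    ∃ τ : Equiv.Perm (Fin 6), pair₁ ∈ B.image (· ∘ τ) := by
  have key : ∀ b : Fin 6 → ZMod 2, Even (hammingNorm b) → b ≠ 0 →
      hammingDist ![1,0,0,0,0,0] b = 1 → ∃ j, b ∘ Equiv.swap 1 j = pair₁ := by
    decide
  obtain ⟨b, hb, hxb⟩ :=
    hT.exists_mem_right_of_mem_left (x := ![1,0,0,0,0,0]) (by decide) h0 (by decide)
  obtain ⟨j, hj⟩ := key b (hT.symm.even_of_mem_left hb) (hT.ne_of_mem_left h0 hb).symm hxb
  exact ⟨Equiv.swap 1 j, Finset.mem_image.mpr ⟨b, hb, hj⟩⟩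

theorem exists_perm_pair₂_mem (hT : IsExtTrade A B) (h0 : 0 ∈ A) (h₁ : pair₁ ∈ B) :
    ∃ τ : Equiv.Perm (Fin 6), pair₁ ∈ B.image (· ∘ τ) ∧ pair₂ ∈ B.image (· ∘ τ) := by
  have key : ∀ b : Fin 6 → ZMod 2, Even (hammingNorm b) → b ≠ 0 →
      hammingDist ![0,0,1,0,0,0] b = 1 → hammingDist b pair₁ ≠ 2 →
      ∃ k, b ∘ Equiv.swap 3 k = pair₂ ∧ pair₁ ∘ Equiv.swap 3 k = pair₁ := by
    decide
  obtain ⟨b, hb, hxb⟩ :=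
    hT.exists_mem_right_of_mem_left (x := ![0,0,1,0,0,0]) (by decide) h0 (by decide)
  obtain ⟨k, hk, hk₁⟩ := key b (hT.symm.even_of_mem_left hb) (hT.ne_of_mem_left h0 hb).symm hxb
    (hT.symm.hammingDist_ne_two_of_mem_left hb h₁)
  exact ⟨Equiv.swap 3 k, Finset.mem_image.mpr ⟨_, h₁, hk₁⟩, Finset.mem_image.mpr ⟨b, hb, hk⟩⟩

theorem pair₃_mem (hT : IsExtTrade A B) (h0 : 0 ∈ A) (h₁ : pair₁ ∈ B) (h₂ : pair₂ ∈ B) :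
    pair₃ ∈ B := by
  have key : ∀ b : Fin 6 → ZMod 2, Even (hammingNorm b) → b ≠ 0 →
      hammingDist ![0,0,0,0,1,0] b = 1 → hammingDist b pair₁ ≠ 2 → hammingDist b pair₂ ≠ 2 →
      b = pair₃ := by
    decide
  obtain ⟨b, hb, hxb⟩ :=
    hT.exists_mem_right_of_mem_left (x := ![0,0,0,0,1,0]) (by decide) h0 (by decide)
  rwa [← key b (hT.symm.even_of_mem_left hb) (hT.ne_of_mem_left h0 hb).symm hxb
    (hT.symm.hammingDist_ne_two_of_mem_left hb h₁) (hT.symm.hammingDist_ne_two_of_mem_left hb h₂)]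

theorem IsPermOfStd.of_image_comp_perm (τ : Equiv.Perm (Fin 6))
    (h : IsPermOfStd (A.image (· ∘ τ)) (B.image (· ∘ τ))) : IsPermOfStd A B := by
  obtain ⟨σ, hA, hB⟩ := h
  refine ⟨σ * τ⁻¹, ?_, ?_⟩
  · rw [← Finset.image_comp_perm_image_comp_inv A τ, hA,
      Finset.image_comp_perm_image_comp_perm]
  · rw [← Finset.image_comp_perm_image_comp_inv B τ, hB,
      Finset.image_comp_perm_image_comp_perm]

theorem isPermOfStd_of_pair₁_pair₂_mem (hT : IsExtTrade A B) (h0 : 0 ∈ A) (h₁ : pair₁ ∈ B)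
    (h₂ : pair₂ ∈ B) : IsPermOfStd A B := by
  obtain ⟨hA, hB⟩ := eq_std_of_pairs_mem hT h0 h₁ h₂ (pair₃_mem hT h0 h₁ h₂)
  exact ⟨1, by simpa using hA, by simpa using hB⟩

theorem isPermOfStd_of_pair₁_mem (hT : IsExtTrade A B) (h0 : 0 ∈ A) (h₁ : pair₁ ∈ B) :
    IsPermOfStd A B := by
  obtain ⟨τ, h₁', h₂'⟩ := exists_perm_pair₂_mem hT h0 h₁
  exact .of_image_comp_perm τ <| isPermOfStd_of_pair₁_pair₂_mem (hT.image_comp_perm τ)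
    (Finset.mem_image_of_mem _ h0) h₁' h₂'

theorem isPermOfStd_of_zero_mem (hT : IsExtTrade A B) (h0 : 0 ∈ A) : IsPermOfStd A B := by
  obtain ⟨τ, h₁⟩ := exists_perm_pair₁_mem hT h0
  exact .of_image_comp_perm τ <| isPermOfStd_of_pair₁_mem (hT.image_comp_perm τ)
    (Finset.mem_image_of_mem _ h0) h₁

theorem exists_eq_image_std {T₀ T₁ : Finset (Fin 6 → ZMod 2)} (hT : IsExtTrade T₀ T₁) :
    ∃ (σ : Equiv.Perm (Fin 6)) (v : Fin 6 → ZMod 2), Even (hammingNorm v) ∧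
      T₀ = std₀.image (fun x => x ∘ σ + v) ∧ T₁ = std₁.image (fun x => x ∘ σ + v) := by
  obtain ⟨v, hv⟩ := hT.1
  have hv_even := hT.even_of_mem_left hv
  have h0 : (0 : Fin 6 → ZMod 2) ∈ T₀.image (· + v) :=
    Finset.mem_image.mpr ⟨v, hv, ZModModule.add_self v⟩
  obtain ⟨σ, h₀, h₁⟩ := isPermOfStd_of_zero_mem (hT.image_add_right hv_even) h0
  refine ⟨σ, v, hv_even, ?_, ?_⟩
  · rw [← Finset.image_add_right_image_add_right T₀ v, h₀, Finset.image_image]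
    rfl
  · rw [← Finset.image_add_right_image_add_right T₁ v, h₁, Finset.image_image]
    rfl

end ExtTradeSix

open ExtTradeSix in
/-- every extended 1-perfect trade of length 6 has volume 4,
satisfies T₁ = T₀ + 1⁶, and is equivalent to the trade
({000000, 111100, 110011, 001111}, {111111, 000011, 001100, 110000}). -/
theorem stmt_14 (T₀ T₁ : Finset (Fin 6 → ZMod 2)) (hT : IsExtTrade T₀ T₁) :
    T₀.card = 4 ∧
    T₁ = T₀.image (fun x => x + fun _ => (1 : ZMod 2)) ∧
    TradeEquiv T₀ T₁
      ({![0,0,0,0,0,0], ![1,1,1,1,0,0], ![1,1,0,0,1,1], ![0,0,1,1,1,1]} :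
        Finset (Fin 6 → ZMod 2))
      ({![1,1,1,1,1,1], ![0,0,0,0,1,1], ![0,0,1,1,0,0], ![1,1,0,0,0,0]} :
        Finset (Fin 6 → ZMod 2)) := by
  obtain ⟨σ, v, hv, h₀, h₁⟩ := exists_eq_image_std hT
  have hinj : Function.Injective fun x : Fin 6 → ZMod 2 => x ∘ σ + v :=
    (add_left_injective v).comp σ.surjective.injective_comp_right
  have hstd₁ : std₁ = std₀.image (fun x => x + fun _ => (1 : ZMod 2)) := by decide
  refine ⟨?_, ?_, σ, v, hv, .inl ⟨h₀.symm, h₁.symm⟩⟩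
  · rw [h₀, Finset.card_image_of_injective _ hinj]
    rfl
  · rw [h₁, h₀, hstd₁, Finset.image_image, Finset.image_image]
    congr 1
    funext x
    ext i
    simp only [Function.comp_apply, Pi.add_apply]
    abel
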